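/- arXiv:1602.02897 — 3 statements merged into one kernel-verified Lean document; each statement's English description precedes it below -/
import Mathlib

section
/- Let α ∈ [1,2), μ > 0, and let x : ℝ → ℝ² \ {0} be an entire zero-energy solution of ẍ = -μ x/|x|^{α+2} with nonzero angular momentum c, written in polar coordinates x(t) = r(t) e^{iθ(t)}. Then the limits θ(±∞) = lim_{t→±∞} θ(t) exist and |θ(+∞) - θ(-∞)| = 2π/(2-α). -/
open Filter

/-- The Euclidean norm on `ℝ × ℝ`. -/
noncomputable def enorm2 (p : ℝ × ℝ) : ℝ := Real.sqrt (p.1 ^ 2 + p.2 ^ 2)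

/-!
Write `r = |x|` and `s = x · v = r ṙ`. At zero energy `ṡ = |v|² - μ / r^α = (2 - α) μ / (α r^α) > 0`
(Lagrange–Jacobi), and Lagrange's identity gives `s² + c² = r² |v|² = (2μ/α) r^(2-α)`. Hence
`θ̇ = c / r² = (2 / (2 - α)) · d/dt arctan (s / c)`, so `θ - (2 / (2 - α)) arctan (s / c)` is constant.
As long as `s` stays bounded so does `r`, and `ṡ` is bounded below by a positive constant; thus `s`
runs from `-∞` to `+∞`, and `arctan (s / c)` sweeps an interval of length `π`.
-/

open Set Real Topology

theorem HasDerivAt.fst {E F : Type*} [NormedAddCommGroup E] [NormedSpace ℝ E]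
    [NormedAddCommGroup F] [NormedSpace ℝ F] {f : ℝ → E × F} {f' : E × F} {t : ℝ}
    (h : HasDerivAt f f' t) : HasDerivAt (fun t => (f t).1) f'.1 t :=
  (hasFDerivAt_fst (𝕜 := ℝ) (p := f t)).comp_hasDerivAt t h

theorem HasDerivAt.snd {E F : Type*} [NormedAddCommGroup E] [NormedSpace ℝ E]
    [NormedAddCommGroup F] [NormedSpace ℝ F] {f : ℝ → E × F} {f' : E × F} {t : ℝ}
    (h : HasDerivAt f f' t) : HasDerivAt (fun t => (f t).2) f'.2 t :=
  (hasFDerivAt_snd (𝕜 := ℝ) (p := f t)).comp_hasDerivAt t h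

theorem enorm2_sq (p : ℝ × ℝ) : enorm2 p ^ 2 = p.1 ^ 2 + p.2 ^ 2 :=
  sq_sqrt (by positivity)

theorem enorm2_pos {p : ℝ × ℝ} (hp : p ≠ 0) : 0 < enorm2 p := by
  refine sqrt_pos.2 (lt_of_le_of_ne (by positivity) fun h => hp ?_)
  have h₁ : p.1 ^ 2 = 0 := by linarith [sq_nonneg p.1, sq_nonneg p.2]
  have h₂ : p.2 ^ 2 = 0 := by linarith [sq_nonneg p.1, sq_nonneg p.2]
  exact Prod.ext (pow_eq_zero_iff two_ne_zero |>.1 h₁) (pow_eq_zero_iff two_ne_zero |>.1 h₂)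

theorem hasDerivAt_polarAngle {x : ℝ → ℝ × ℝ} {v : ℝ × ℝ} {θ : ℝ → ℝ} {t₀ : ℝ}
    (hx : HasDerivAt x v t₀) (hx₀ : x t₀ ≠ 0) (hθc : ContinuousAt θ t₀)
    (hθ : ∀ t, x t = (enorm2 (x t) * cos (θ t), enorm2 (x t) * sin (θ t))) :
    HasDerivAt θ (((x t₀).1 * v.2 - (x t₀).2 * v.1) / enorm2 (x t₀) ^ 2) t₀ := by
  set p := x t₀
  let N : ℝ → ℝ := fun t => p.1 * (x t).2 - p.2 * (x t).1
  let D : ℝ → ℝ := fun t => p.1 * (x t).1 + p.2 * (x t).2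
  -- `N` and `D` are `r₀ r sin (θ - θ₀)` and `r₀ r cos (θ - θ₀)`, so `θ - θ₀ = arctan (N / D)` near `t₀`.
  have hlift : ∀ᶠ t in 𝓝 t₀, θ t₀ + arctan (N t / D t) = θ t := by
    have hθnear : ∀ᶠ t in 𝓝 t₀, dist (θ t) (θ t₀) < π / 2 :=
      hθc (Metric.ball_mem_nhds _ (by positivity))
    filter_upwards [hx.continuousAt.eventually_ne hx₀, hθnear] with t hxt hθt
    rw [dist_eq, abs_lt] at hθt
    have hr : enorm2 p * enorm2 (x t) ≠ 0 := (mul_pos (enorm2_pos hx₀) (enorm2_pos hxt)).ne'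
    have h₁ : (x t).1 = enorm2 (x t) * cos (θ t) := congrArg Prod.fst (hθ t)
    have h₂ : (x t).2 = enorm2 (x t) * sin (θ t) := congrArg Prod.snd (hθ t)
    have h₁₀ : p.1 = enorm2 p * cos (θ t₀) := congrArg Prod.fst (hθ t₀)
    have h₂₀ : p.2 = enorm2 p * sin (θ t₀) := congrArg Prod.snd (hθ t₀)
    have hND : N t / D t = tan (θ t - θ t₀) := by
      rw [tan_eq_sin_div_cos, ← mul_div_mul_left (sin _) (cos _) hr, sin_sub, cos_sub]
      simp only [N, D, h₁, h₂, h₁₀, h₂₀]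
      congr 1 <;> ring
    rw [hND, arctan_tan (by linarith) (by linarith)]
    ring
  have hN : HasDerivAt N (p.1 * v.2 - p.2 * v.1) t₀ :=
    (hx.snd.const_mul p.1).sub (hx.fst.const_mul p.2)
  have hD : HasDerivAt D (p.1 * v.1 + p.2 * v.2) t₀ :=
    (hx.fst.const_mul p.1).add (hx.snd.const_mul p.2)
  have hN₀ : N t₀ = 0 := by simp only [N]; ring
  have hD₀ : D t₀ = enorm2 p ^ 2 := by simp only [D, enorm2_sq]; ring
  have hD₀' : D t₀ ≠ 0 := hD₀ ▸ pow_ne_zero 2 (enorm2_pos hx₀).ne'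
  refine ((((hN.div hD hD₀').arctan).const_add (θ t₀)).congr_deriv ?_).congr_of_eventuallyEq
    (hlift.mono fun t ht => ht.symm)
  simp only [Pi.div_apply, hN₀, ← hD₀]
  field_simp
  ring

theorem tendsto_atTop_atTop_of_hasDerivAt {f f' : ℝ → ℝ} (hf : ∀ t, HasDerivAt f (f' t) t)
    (hf' : ∀ a b, ∃ δ > 0, ∀ t, f t ∈ Icc a b → δ ≤ f' t) : Tendsto f atTop atTop := by
  have hmono : Monotone f := monotone_of_deriv_nonneg (fun t => (hf t).differentiableAt) fun t => by
    obtain ⟨δ, hδ, h⟩ := hf' (f t) (f t)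
    rw [(hf t).deriv]
    exact hδ.le.trans (h t ⟨le_rfl, le_rfl⟩)
  refine tendsto_atTop_atTop_of_monotone hmono fun b => ?_
  by_contra! hb
  obtain ⟨δ, hδ, h⟩ := hf' (f 0) b
  set T := (b - f 0) / δ
  have hT0 : T ∈ Ici 0 := div_nonneg (sub_nonneg.2 (hb 0).le) hδ.le
  -- while `f` stays below `b` it grows at least linearly
  have hT : δ * (T - 0) ≤ f T - f 0 :=
    (convex_Ici 0).mul_sub_le_image_sub_of_le_deriv
      (continuous_iff_continuousAt.2 fun t => (hf t).continuousAt).continuousOn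
      (fun t _ => (hf t).differentiableAt.differentiableWithinAt)
      (fun t ht => (hf t).deriv ▸ h t ⟨hmono (interior_subset ht), (hb t).le⟩)
      0 self_mem_Ici T hT0 hT0
  rw [sub_zero, mul_div_cancel₀ _ hδ.ne'] at hT
  linarith [hb T]

theorem tendsto_atBot_atBot_of_hasDerivAt {f f' : ℝ → ℝ} (hf : ∀ t, HasDerivAt f (f' t) t)
    (hf' : ∀ a b, ∃ δ > 0, ∀ t, f t ∈ Icc a b → δ ≤ f' t) : Tendsto f atBot atBot := by
  have hg : Tendsto (fun t => -f (-t)) atTop atTop := by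
    refine tendsto_atTop_atTop_of_hasDerivAt (f' := fun t => f' (-t)) (fun t => ?_) fun a b => ?_
    · simpa [Function.comp_def] using ((hf (-t)).comp t (hasDerivAt_neg t)).fun_neg
    · obtain ⟨δ, hδ, h⟩ := hf' (-b) (-a)
      exact ⟨δ, hδ, fun t ht => h (-t) ⟨by linarith [ht.2], by linarith [ht.1]⟩⟩
  simpa [Function.comp_def] using tendsto_neg_atTop_atBot.comp (hg.comp tendsto_neg_atBot_atTop)

theorem exists_tendsto_arctan_div {f : ℝ → ℝ} {c : ℝ} (hc : c ≠ 0)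
    (htop : Tendsto f atTop atTop) (hbot : Tendsto f atBot atBot) :
    ∃ Lp Lm, Tendsto (fun t => arctan (f t / c)) atTop (𝓝 Lp) ∧
      Tendsto (fun t => arctan (f t / c)) atBot (𝓝 Lm) ∧ |Lp - Lm| = π := by
  have harctan_top := tendsto_arctan_atTop.mono_right nhdsWithin_le_nhds
  have harctan_bot := tendsto_arctan_atBot.mono_right nhdsWithin_le_nhds
  rcases hc.lt_or_gt with hc | hc
  · refine ⟨-(π / 2), π / 2, harctan_bot.comp (htop.atTop_div_const_of_neg hc),
      harctan_top.comp ?_, by rw [abs_of_neg (by linarith [pi_pos])]; ring⟩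
    simpa only [div_eq_mul_inv] using hbot.atBot_mul_const_of_neg (inv_lt_zero.2 hc)
  · exact ⟨π / 2, -(π / 2), harctan_top.comp (htop.atTop_div_const hc),
      harctan_bot.comp (hbot.atBot_div_const hc), by rw [abs_of_pos (by linarith [pi_pos])]; ring⟩

section RadialMotion

variable {μ α c : ℝ} {r s θ : ℝ → ℝ}

theorem exists_pos_le_div_rpow_of_mem_Icc (hμ : 0 < μ) (hα : 0 < α) (hα' : α < 2)
    (hc : c ≠ 0) (hr : ∀ t, 0 < r t) (hsc : ∀ t, s t ^ 2 + c ^ 2 = 2 * μ / α * r t ^ (2 - α))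
    (a b : ℝ) : ∃ δ > 0, ∀ t, s t ∈ Icc a b → δ ≤ μ * (2 - α) / (α * r t ^ α) := by
  have h2α : 0 < 2 - α := sub_pos.2 hα'
  have hk : 0 < 2 * μ / α := by positivity
  set M := (a ^ 2 + b ^ 2 + c ^ 2) / (2 * μ / α)
  have hM : 0 < M := by positivity
  set R := M ^ (2 - α)⁻¹
  have hR : 0 < R := rpow_pos_of_pos hM _
  refine ⟨μ * (2 - α) / (α * R ^ α), by positivity, fun t ht => ?_⟩
  have hs : s t ^ 2 ≤ a ^ 2 + b ^ 2 := by
    rcases le_total 0 (s t) with h | h <;> nlinarith [ht.1, ht.2]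
  have hrM : r t ^ (2 - α) ≤ M := by
    rw [le_div_iff₀ hk, mul_comm, ← hsc t]
    linarith
  have hrR : r t ≤ R := by
    rwa [← rpow_le_rpow_iff (hr t).le hR.le h2α, rpow_inv_rpow hM.le (by linarith)]
  have hrt := hr t
  gcongr

theorem hasDerivAt_arctan_div_of_radial {t : ℝ} (hμ : μ ≠ 0) (hα : α ≠ 0) (hα' : α ≠ 2)
    (hc : c ≠ 0) (hr : 0 < r t) (hs : HasDerivAt s (μ * (2 - α) / (α * r t ^ α)) t)
    (hsc : s t ^ 2 + c ^ 2 = 2 * μ / α * r t ^ (2 - α)) :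
    HasDerivAt (fun t => 2 / (2 - α) * arctan (s t / c)) (c / r t ^ 2) t := by
  refine ((hs.div_const c).arctan.const_mul _).congr_deriv ?_
  have h2α : 2 - α ≠ 0 := sub_ne_zero.2 hα'.symm
  rw [rpow_sub hr, rpow_two] at hsc
  have : c ^ 2 + s t ^ 2 ≠ 0 := by positivity
  field_simp
  rw [add_comm, hsc]
  field_simp

theorem angular_span_of_radial_motion (hμ : 0 < μ) (hα : 0 < α) (hα' : α < 2) (hc : c ≠ 0)
    (hr : ∀ t, 0 < r t) (hs : ∀ t, HasDerivAt s (μ * (2 - α) / (α * r t ^ α)) t)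
    (hsc : ∀ t, s t ^ 2 + c ^ 2 = 2 * μ / α * r t ^ (2 - α))
    (hθ : ∀ t, HasDerivAt θ (c / r t ^ 2) t) :
    ∃ θp θm : ℝ, Tendsto θ atTop (𝓝 θp) ∧ Tendsto θ atBot (𝓝 θm) ∧
      |θp - θm| = 2 * π / (2 - α) := by
  set K := 2 / (2 - α)
  have hF : ∀ t, HasDerivAt (fun t => K * arctan (s t / c)) (c / r t ^ 2) t := fun t =>
    hasDerivAt_arctan_div_of_radial hμ.ne' hα.ne' hα'.ne hc (hr t) (hs t) (hsc t)
  set C := θ 0 - K * arctan (s 0 / c)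
  have hθF : θ = fun t => C + K * arctan (s t / c) := funext fun t => by
    have := is_const_of_deriv_eq_zero (f := fun t => θ t - K * arctan (s t / c))
      (fun t => ((hθ t).fun_sub (hF t)).differentiableAt)
      (fun t => by rw [((hθ t).fun_sub (hF t)).deriv, sub_self]) t 0
    linarith
  have hbound := exists_pos_le_div_rpow_of_mem_Icc hμ hα hα' hc hr hsc
  obtain ⟨Lp, Lm, hLp, hLm, hL⟩ := exists_tendsto_arctan_div hc
    (tendsto_atTop_atTop_of_hasDerivAt hs hbound) (tendsto_atBot_atBot_of_hasDerivAt hs hbound)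
  refine ⟨C + K * Lp, C + K * Lm, ?_, ?_, ?_⟩
  · rw [hθF]
    exact (hLp.const_mul K).const_add C
  · rw [hθF]
    exact (hLm.const_mul K).const_add C
  · rw [add_sub_add_left_eq_sub, ← mul_sub, abs_mul, hL, abs_of_pos (by positivity)]
    ring

end RadialMotion

section ZeroEnergy

variable {μ α : ℝ} {x v : ℝ → ℝ × ℝ} {t : ℝ}

theorem hasDerivAt_dot_of_zero_energy (hα : α ≠ 0) (hx₀ : x t ≠ 0)
    (hx : HasDerivAt x (v t) t) (hv : HasDerivAt v (-(μ / enorm2 (x t) ^ (α + 2)) • x t) t)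
    (henergy : 1 / 2 * ((v t).1 ^ 2 + (v t).2 ^ 2) = μ / (α * enorm2 (x t) ^ α)) :
    HasDerivAt (fun t => (x t).1 * (v t).1 + (x t).2 * (v t).2)
      (μ * (2 - α) / (α * enorm2 (x t) ^ α)) t := by
  refine ((hx.fst.mul hv.fst).add (hx.snd.mul hv.snd)).congr_deriv ?_
  have hr := enorm2_pos hx₀
  have : enorm2 (x t) ^ α ≠ 0 := (rpow_pos_of_pos hr α).ne'
  have hv2 : (v t).1 ^ 2 + (v t).2 ^ 2 = 2 * μ / (α * enorm2 (x t) ^ α) := by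
    rw [mul_div_assoc, ← henergy]
    ring
  simp only [Prod.smul_fst, Prod.smul_snd, smul_eq_mul]
  rw [rpow_add hr, rpow_two]
  calc _ = (v t).1 ^ 2 + (v t).2 ^ 2
        - μ / (enorm2 (x t) ^ α * enorm2 (x t) ^ 2) * ((x t).1 ^ 2 + (x t).2 ^ 2) := by ring
    _ = 2 * μ / (α * enorm2 (x t) ^ α)
        - μ / (enorm2 (x t) ^ α * enorm2 (x t) ^ 2) * enorm2 (x t) ^ 2 := by
      rw [hv2, enorm2_sq]
    _ = _ := by field_simp

theorem dot_sq_add_cross_sq_of_zero_energy (hx₀ : x t ≠ 0)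
    (henergy : 1 / 2 * ((v t).1 ^ 2 + (v t).2 ^ 2) = μ / (α * enorm2 (x t) ^ α)) :
    ((x t).1 * (v t).1 + (x t).2 * (v t).2) ^ 2 + ((x t).1 * (v t).2 - (x t).2 * (v t).1) ^ 2
      = 2 * μ / α * enorm2 (x t) ^ (2 - α) := by
  rw [rpow_sub (enorm2_pos hx₀), rpow_two, enorm2_sq]
  calc _ = ((x t).1 ^ 2 + (x t).2 ^ 2) * (2 * (1 / 2 * ((v t).1 ^ 2 + (v t).2 ^ 2))) := by ring
    _ = _ := by rw [henergy]; ring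

end ZeroEnergy

theorem parabolic_angular_span
    (μ α : ℝ) (hμ : 0 < μ) (hα : 1 ≤ α) (hα' : α < 2)
    (x v : ℝ → ℝ × ℝ) (θ : ℝ → ℝ) (c : ℝ) (hc : c ≠ 0)
    (hx0 : ∀ t, x t ≠ 0)
    (hx : ∀ t, HasDerivAt x (v t) t)
    (hv : ∀ t, HasDerivAt v (-(μ / enorm2 (x t) ^ (α + 2)) • x t) t)
    (henergy : ∀ t, (1 / 2) * ((v t).1 ^ 2 + (v t).2 ^ 2) = μ / (α * enorm2 (x t) ^ α))
    (hmom : ∀ t, (x t).1 * (v t).2 - (x t).2 * (v t).1 = c)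
    (hθcont : Continuous θ)
    (hθ : ∀ t, x t = (enorm2 (x t) * Real.cos (θ t), enorm2 (x t) * Real.sin (θ t))) :
    ∃ θp θm : ℝ,
      Tendsto θ atTop (nhds θp) ∧ Tendsto θ atBot (nhds θm) ∧
      |θp - θm| = 2 * Real.pi / (2 - α) := by
  have hα₀ : 0 < α := by linarith
  refine angular_span_of_radial_motion hμ hα₀ hα' hc (fun t => enorm2_pos (hx0 t))
    (fun t => hasDerivAt_dot_of_zero_energy hα₀.ne' (hx0 t) (hx t) (hv t) (henergy t))
    (fun t => ?_) (fun t => ?_)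
  · rw [← hmom t]
    exact dot_sq_add_cross_sq_of_zero_energy (hx0 t) (henergy t)
  · rw [← hmom t]
    exact hasDerivAt_polarAngle (hx t) (hx0 t) hθcont.continuousAt hθ
end

section
/- Let m > 0, α ∈ [1,2), K > 0, and let r : [t₁,t₂] → [K,∞) be a C² function with ṙ > 0 on (t₁,t₂], satisfying (d²/dt²)(½r²)(t) ≥ ((2-α)m)/(2α r(t)^α) for all t. Then t₂ - t₁ ≤ √(2α/((2-α)m)) · r(t₂)^{1+α/2}. -/
/-! Since `r` increases, `r(t)^α ≤ r(t₂)^α`, so the Lagrange–Jacobi inequality bounds `(r ṙ)˙`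
below by the constant `c = (2-α)m / (2α r(t₂)^α)`. Integrating twice from `t₁`, and using
`r(t₁) ṙ(t₁) ≥ 0` (a limit of positive values), gives `c (t₂ - t₁)² ≤ r(t₂)²`, which is the
claim after taking square roots. -/

open Set

lemma image_le_of_hasDerivAt_le {f f' B B' : ℝ → ℝ} {a b : ℝ}
    (hf : ∀ x ∈ Icc a b, HasDerivAt f (f' x) x) (hB : ∀ x ∈ Icc a b, HasDerivAt B (B' x) x)
    (ha : f a ≤ B a) (bound : ∀ x ∈ Ico a b, f' x ≤ B' x) :
    ∀ x ∈ Icc a b, f x ≤ B x :=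
  image_le_of_deriv_right_le_deriv_boundary
    (fun x hx => (hf x hx).continuousAt.continuousWithinAt)
    (fun x hx => (hf x (Ico_subset_Icc_self hx)).hasDerivWithinAt) ha
    (fun x hx => (hB x hx).continuousAt.continuousWithinAt)
    (fun x hx => (hB x (Ico_subset_Icc_self hx)).hasDerivWithinAt) bound

lemma sq_add_le_sq_of_le_deriv_mul_deriv {r r' d : ℝ → ℝ} {a b c : ℝ}
    (hr : ∀ t ∈ Icc a b, HasDerivAt r (r' t) t)
    (hd : ∀ t ∈ Icc a b, HasDerivAt (fun s => r s * r' s) (d t) t)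
    (hc : ∀ t ∈ Icc a b, c ≤ d t) (hab : a ≤ b) :
    r a ^ 2 + 2 * (r a * r' a) * (b - a) + c * (b - a) ^ 2 ≤ r b ^ 2 := by
  have hmul_ge : ∀ t ∈ Icc a b, r a * r' a + c * (t - a) ≤ r t * r' t :=
    image_le_of_hasDerivAt_le (f' := fun _ => c)
      (fun t _ => by
        simpa using (((hasDerivAt_id t).sub_const a).const_mul c).const_add (r a * r' a))
      hd (by simp) (fun t ht => hc t (Ico_subset_Icc_self ht))
  refine image_le_of_hasDerivAt_le
    (f := fun t => r a ^ 2 + 2 * (r a * r' a) * (t - a) + c * (t - a) ^ 2)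
    (f' := fun t => 2 * (r a * r' a) + 2 * c * (t - a)) (B := fun t => r t ^ 2)
    (B' := fun t => 2 * (r t * r' t)) (fun t _ => ?_) (fun t ht => ?_) (by simp)
    (fun t ht => by linarith [hmul_ge t (Ico_subset_Icc_self ht)]) b ⟨hab, le_rfl⟩
  · have hlin := (hasDerivAt_id' t).sub_const a
    exact (((hlin.const_mul _).const_add _).add ((hlin.pow 2).const_mul c)).congr_deriv
      (by norm_num; ring)
  · exact ((hr t ht).pow 2).congr_deriv (by norm_num; ring)

lemma le_sqrt_div_mul_rpow_of_div_mul_sq_le {A B R α x : ℝ} (hA : 0 < A) (hB : 0 < B)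
    (hR : 0 < R) (h : A / (B * R ^ α) * x ^ 2 ≤ R ^ 2) :
    x ≤ √(B / A) * R ^ (1 + α / 2) := by
  have hRα : 0 < R ^ α := Real.rpow_pos_of_pos hR α
  have hrpow : R ^ (1 + α / 2) = √(R ^ 2 * R ^ α) := by
    rw [Real.sqrt_eq_rpow, ← Real.rpow_two, ← Real.rpow_add hR, ← Real.rpow_mul hR.le]
    ring_nf
  rw [hrpow, ← Real.sqrt_mul (by positivity)]
  refine (le_abs_self x).trans (Real.abs_le_sqrt ?_)
  rw [div_mul_eq_mul_div, div_le_iff₀ (by positivity)] at h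
  rw [div_mul_eq_mul_div, le_div_iff₀ hA]
  linarith

theorem time_estimate_above
    (m α K : ℝ) (hm : 0 < m) (hα : 1 ≤ α) (hα' : α < 2) (hK : 0 < K)
    (t₁ t₂ : ℝ) (ht : t₁ ≤ t₂)
    (r r' d : ℝ → ℝ)
    (hrange : ∀ t ∈ Icc t₁ t₂, K ≤ r t)
    (hr : ∀ t ∈ Icc t₁ t₂, HasDerivAt r (r' t) t)
    (hd : ∀ t ∈ Icc t₁ t₂, HasDerivAt (fun s => r s * r' s) (d t) t)
    (hr'pos : ∀ t ∈ Ioc t₁ t₂, 0 < r' t)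
    (hLJ : ∀ t ∈ Icc t₁ t₂, (2 - α) * m / (2 * α * r t ^ α) ≤ d t) :
    t₂ - t₁ ≤ Real.sqrt (2 * α / ((2 - α) * m)) * r t₂ ^ (1 + α / 2) := by
  have hpos : ∀ t ∈ Icc t₁ t₂, 0 < r t := fun t ht => hK.trans_le (hrange t ht)
  have hrt₂ := hpos t₂ ⟨ht, le_rfl⟩
  rcases ht.eq_or_lt with rfl | hlt
  · rw [sub_self]
    exact mul_nonneg (Real.sqrt_nonneg _) (Real.rpow_nonneg hrt₂.le _)
  have hmono : MonotoneOn r (Icc t₁ t₂) :=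
    monotoneOn_of_hasDerivWithinAt_nonneg (convex_Icc _ _)
      (fun t ht => (hr t ht).continuousAt.continuousWithinAt)
      (fun t ht => (hr t (interior_subset ht)).hasDerivWithinAt)
      (fun t ht => by rw [interior_Icc] at ht; exact (hr'pos t (Ioo_subset_Ioc_self ht)).le)
  have hd_ge : ∀ t ∈ Icc t₁ t₂, (2 - α) * m / (2 * α * r t₂ ^ α) ≤ d t := by
    intro t ht'
    refine (hLJ t ht').trans' (div_le_div_of_nonneg_left (by nlinarith) ?_ ?_)
    · exact mul_pos (by positivity) (Real.rpow_pos_of_pos (hpos t ht') α)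
    · gcongr
      exacts [(hpos t ht').le, hmono ht' ⟨ht, le_rfl⟩ ht'.2]
  have h₀ : 0 ≤ r t₁ * r' t₁ :=
    ContinuousWithinAt.closure_le (f := fun _ => 0) (g := fun s => r s * r' s)
      (by simp [closure_Ioc hlt.ne, ht])
      continuousWithinAt_const (hd t₁ ⟨le_rfl, ht⟩).continuousAt.continuousWithinAt
      fun t ht' => (mul_pos (hpos t (Ioc_subset_Icc_self ht')) (hr'pos t ht')).le
  have hsq := sq_add_le_sq_of_le_deriv_mul_deriv hr hd hd_ge ht
  refine le_sqrt_div_mul_rpow_of_div_mul_sq_le (by nlinarith) (by linarith) hrt₂ ?_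
  nlinarith [sq_nonneg (r t₁), mul_nonneg h₀ (sub_nonneg.2 ht)]
end

section
/- Let α ∈ (0,2), m > 0, μ = m. Define u : [-1,1] → ℝ³ by u(t) = (-t)^{2/(2+α)} x₁ for t ∈ [-1,0] and u(t) = t^{2/(2+α)} x₂ for t ∈ [0,1], where x₁, x₂ ∈ 𝕊². Then u ∈ H¹([-1,1]; ℝ³) and the Maupertuis functional I(u) = (∫_{-1}^1 |u̇|²)(∫_{-1}^1 μ/(α|u|^α)) equals ½(√(2μ/α) · 4/(2-α))². -/
open Set MeasureTheory intervalIntegral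

/-!
On each half-line the path is radial with `‖u t‖ = |t| ^ p`, `p = 2 / (2 + α)`, so away from the
collision instant `‖u̇ t‖² = p² |t| ^ (2p - 2)` and `μ / (α ‖u t‖ ^ α) = (μ / α) |t| ^ (-pα)`.
Both exponents exceed `-1` precisely because `α < 2`, and `∫_{-1}^1 |t| ^ r = 2 / (r + 1)`.
-/

noncomputable def collisionEjectionPath {E : Type*} [SMul ℝ E]
    (p : ℝ) (x₁ x₂ : E) (t : ℝ) : E :=
  if t ≤ 0 then (-t) ^ p • x₁ else t ^ p • x₂

section collisionEjectionPath

variable {E : Type*} [NormedAddCommGroup E] [NormedSpace ℝ E] {p : ℝ} {x₁ x₂ : E}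

theorem continuous_collisionEjectionPath (hp : 0 < p) :
    Continuous (collisionEjectionPath p x₁ x₂) := by
  have hpow : Continuous fun t : ℝ => t ^ p := by fun_prop (disch := exact hp.le)
  refine Continuous.if_le ((hpow.comp continuous_neg).smul continuous_const)
    (hpow.smul continuous_const) continuous_id continuous_const fun t ht => ?_
  simp [show t = 0 from ht, Real.zero_rpow hp.ne']

theorem norm_collisionEjectionPath (hx₁ : ‖x₁‖ = 1) (hx₂ : ‖x₂‖ = 1) (t : ℝ) :
    ‖collisionEjectionPath p x₁ x₂ t‖ = |t| ^ p := by
  unfold collisionEjectionPath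
  split_ifs with ht
  · rw [norm_smul, hx₁, mul_one, abs_of_nonpos ht,
      Real.norm_of_nonneg (Real.rpow_nonneg (neg_nonneg.2 ht) p)]
  · rw [norm_smul, hx₂, mul_one, abs_of_pos (not_le.1 ht),
      Real.norm_of_nonneg (Real.rpow_nonneg (not_le.1 ht).le p)]

theorem hasDerivAt_collisionEjectionPath_of_neg {t : ℝ} (ht : t < 0) :
    HasDerivAt (collisionEjectionPath p x₁ x₂) (-(p * (-t) ^ (p - 1)) • x₁) t := by
  have hpow : HasDerivAt (fun s : ℝ => (-s) ^ p) (p * (-t) ^ (p - 1) * -1) t :=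
    (Real.hasDerivAt_rpow_const (Or.inl (neg_ne_zero.2 ht.ne))).comp t (hasDerivAt_neg t)
  rw [← mul_neg_one]
  refine (hpow.smul_const x₁).congr_of_eventuallyEq ?_
  filter_upwards [Iio_mem_nhds ht] with s hs
  exact if_pos (le_of_lt hs)

theorem hasDerivAt_collisionEjectionPath_of_pos {t : ℝ} (ht : 0 < t) :
    HasDerivAt (collisionEjectionPath p x₁ x₂) ((p * t ^ (p - 1)) • x₂) t := by
  refine ((Real.hasDerivAt_rpow_const (Or.inl ht.ne')).smul_const x₂).congr_of_eventuallyEq ?_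
  filter_upwards [Ioi_mem_nhds ht] with s hs
  exact if_neg (not_le.2 hs)

theorem norm_deriv_collisionEjectionPath (hx₁ : ‖x₁‖ = 1) (hx₂ : ‖x₂‖ = 1) {t : ℝ}
    (ht : t ≠ 0) : ‖deriv (collisionEjectionPath p x₁ x₂) t‖ = |p| * |t| ^ (p - 1) := by
  rcases ht.lt_or_gt with ht | ht
  · rw [(hasDerivAt_collisionEjectionPath_of_neg ht).deriv, norm_smul, hx₁, mul_one, norm_neg,
      Real.norm_eq_abs, abs_mul, abs_of_neg ht,
      abs_of_nonneg (Real.rpow_nonneg (neg_nonneg.2 ht.le) _)]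
  · rw [(hasDerivAt_collisionEjectionPath_of_pos ht).deriv, norm_smul, hx₂, mul_one,
      Real.norm_eq_abs, abs_mul, abs_of_pos ht, abs_of_nonneg (Real.rpow_nonneg ht.le _)]

end collisionEjectionPath

theorem intervalIntegrable_abs_rpow {r : ℝ} (hr : -1 < r) (a b : ℝ) :
    IntervalIntegrable (fun t => |t| ^ r) volume a b := by
  have from_zero_of_nonneg : ∀ c, 0 ≤ c → IntervalIntegrable (fun t => |t| ^ r) volume 0 c :=
    fun c hc => (intervalIntegrable_rpow' hr).congr fun t ht => by
      rw [uIoc_of_le hc] at ht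
      simp only [abs_of_pos ht.1]
  have from_zero : ∀ c, IntervalIntegrable (fun t => |t| ^ r) volume 0 c := by
    intro c
    rcases le_total 0 c with hc | hc
    · exact from_zero_of_nonneg c hc
    · simpa using (IntervalIntegrable.iff_comp_neg).1 (from_zero_of_nonneg (-c) (by linarith))
  exact (from_zero a).symm.trans (from_zero b)

theorem integral_abs_rpow {r : ℝ} (hr : -1 < r) {c : ℝ} (hc : 0 ≤ c) :
    ∫ t in -c..c, |t| ^ r = 2 * c ^ (r + 1) / (r + 1) := by
  have half : ∫ t in (0:ℝ)..c, |t| ^ r = c ^ (r + 1) / (r + 1) := by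
    rw [integral_congr (g := fun t => t ^ r) fun t ht => by
        rw [uIcc_of_le hc] at ht
        simp only [abs_of_nonneg ht.1],
      integral_rpow (Or.inl hr), Real.zero_rpow (by linarith), sub_zero]
  have reflect : ∫ t in -c..0, |t| ^ r = ∫ t in (0:ℝ)..c, |t| ^ r := by
    simpa using (integral_comp_neg (a := 0) (b := c) fun t => |t| ^ r).symm
  rw [← integral_add_adjacent_intervals (intervalIntegrable_abs_rpow hr _ _)
    (intervalIntegrable_abs_rpow hr _ _), reflect, half]
  ring

theorem test_function_maupertuis_value
    (α μ : ℝ) (hα : 0 < α) (hα' : α < 2) (hμ : 0 < μ)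
    (x₁ x₂ : EuclideanSpace ℝ (Fin 3)) (hx₁ : ‖x₁‖ = 1) (hx₂ : ‖x₂‖ = 1)
    (u : ℝ → EuclideanSpace ℝ (Fin 3))
    (hu : ∀ t : ℝ, u t = if t ≤ 0 then ((-t) ^ ((2:ℝ) / (2 + α))) • x₁
                         else (t ^ ((2:ℝ) / (2 + α))) • x₂) :
    ContinuousOn u (Icc (-1:ℝ) 1) ∧
    IntervalIntegrable (fun t => ‖deriv u t‖ ^ 2) volume (-1) 1 ∧
    (∫ t in (-1:ℝ)..1, ‖deriv u t‖ ^ 2) *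
      (∫ t in (-1:ℝ)..1, μ / (α * ‖u t‖ ^ α)) =
      (1 / 2) * (Real.sqrt (2 * μ / α) * 4 / (2 - α)) ^ 2 := by
  set p : ℝ := 2 / (2 + α) with hp_def
  have hu_eq : u = collisionEjectionPath p x₁ x₂ := funext hu
  have kinetic : (fun t => ‖deriv u t‖ ^ 2) =ᵐ[volume] fun t => p ^ 2 * |t| ^ (2 * p - 2) := by
    filter_upwards [Measure.ae_ne volume 0] with t ht
    rw [hu_eq, norm_deriv_collisionEjectionPath hx₁ hx₂ ht, mul_pow, sq_abs,
      ← Real.rpow_mul_natCast (abs_nonneg t)]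
    ring_nf
  have potential : (fun t => μ / (α * ‖u t‖ ^ α)) = fun t => μ / α * |t| ^ (-(p * α)) := by
    funext t
    rw [hu_eq, norm_collisionEjectionPath hx₁ hx₂, ← Real.rpow_mul (abs_nonneg t),
      Real.rpow_neg (abs_nonneg t), div_mul_eq_div_div, div_eq_mul_inv]
  have kinetic_exponent : 2 * p - 2 + 1 = (2 - α) / (2 + α) := by
    rw [hp_def]; field_simp; ring
  have potential_exponent : -(p * α) + 1 = (2 - α) / (2 + α) := by
    rw [hp_def]; field_simp; ring
  have gap_pos : 0 < (2 - α) / (2 + α) := div_pos (by linarith) (by linarith)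
  have hr_kinetic : -1 < 2 * p - 2 := by linarith
  have hr_potential : -1 < -(p * α) := by linarith
  refine ⟨hu_eq ▸ (continuous_collisionEjectionPath (by positivity)).continuousOn,
    ((intervalIntegrable_abs_rpow hr_kinetic _ _).const_mul _).congr_ae
      (ae_restrict_of_ae kinetic.symm), ?_⟩
  rw [integral_congr_ae_restrict (ae_restrict_of_ae kinetic), potential,
    intervalIntegral.integral_const_mul, intervalIntegral.integral_const_mul,
    integral_abs_rpow hr_kinetic zero_le_one, integral_abs_rpow hr_potential zero_le_one,
    Real.one_rpow, Real.one_rpow, kinetic_exponent, potential_exponent,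
    div_pow (√(2 * μ / α) * 4), mul_pow, Real.sq_sqrt (by positivity), hp_def]
  have h2α : (2:ℝ) - α ≠ 0 := by linarith
  field_simp
  ring
end
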